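/- Let A, X₁, X₂, X₃ be pairwise commuting bounded operators on a complex Hilbert space such that ‖p(A, X₁, X₂, X₃)‖ ≤ sup_{w ∈ ℍ̄} |p(w)| for every polynomial p ∈ ℂ[z₀, z₁, z₂, z₃] (an ℍ-contraction). Then: (1) ‖q(A, X₁)‖ ≤ sup_{w ∈ 𝔹̄₂} |q(w)| and ‖q(A, X₂)‖ ≤ sup_{w ∈ 𝔹̄₂} |q(w)| for every polynomial q ∈ ℂ[z, w]; (2) ‖q(X₁, X₂, X₃)‖ ≤ sup_{x ∈ 𝔼̄} |q(x)| for every polynomial q ∈ ℂ[z₁, z₂, z₃]; (3) ‖q(A, X₁ + X₂, X₃)‖ ≤ sup_{w ∈ ℙ̄} |q(w)| for every polynomial q ∈ ℂ[z₀, z₁, z₂]. -/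

import Mathlib

noncomputable section

open Complex

/-- The closed tetrablock `𝔼̄ ⊆ ℂ³`. -/
def closedTetrablock : Set (ℂ × ℂ × ℂ) :=
  {x | ‖x.1‖ ≤ 1 ∧
    0 ≤ 1 + ‖x.1‖ ^ 2 - ‖x.2.1‖ ^ 2 - ‖x.2.2‖ ^ 2
      - 2 * ‖x.1 - (starRingEnd ℂ) x.2.1 * x.2.2‖}

/-- The closed hexablock `ℍ̄ ⊆ ℂ⁴`. -/
def closedHexablock : Set (ℂ × ℂ × ℂ × ℂ) :=
  {w | (w.2.1, w.2.2.1, w.2.2.2) ∈ closedTetrablock ∧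
    ∀ z₁ z₂ : ℂ, ‖z₁‖ < 1 → ‖z₂‖ < 1 →
      ‖w.1‖ * Real.sqrt ((1 - ‖z₁‖ ^ 2) * (1 - ‖z₂‖ ^ 2)) ≤
        ‖1 - w.2.1 * z₁ - w.2.2.1 * z₂ + w.2.2.2 * z₁ * z₂‖}

/-- `sup_{w ∈ ℍ̄} |p(w)|` for a polynomial `p` in four variables. -/
def hexPolySup (p : MvPolynomial (Fin 4) ℂ) : ℝ :=
  sSup ((fun w : ℂ × ℂ × ℂ × ℂ =>
    ‖MvPolynomial.eval ![w.1, w.2.1, w.2.2.1, w.2.2.2] p‖) '' closedHexablock)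

/-- `sup_{x ∈ 𝔼̄} |q(x)|` for a polynomial `q` in three variables. -/
def tetraPolySup (q : MvPolynomial (Fin 3) ℂ) : ℝ :=
  sSup ((fun x : ℂ × ℂ × ℂ =>
    ‖MvPolynomial.eval ![x.1, x.2.1, x.2.2] q‖) '' closedTetrablock)

variable {H : Type*} [NormedAddCommGroup H] [InnerProductSpace ℂ H] [CompleteSpace H]

/-- Evaluation of a four-variable polynomial at a commuting quadruple of
operators. -/
def evalOp4 (T₀ T₁ T₂ T₃ : H →L[ℂ] H) (p : MvPolynomial (Fin 4) ℂ) : H →L[ℂ] H :=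
  p.support.sum fun s =>
    MvPolynomial.coeff s p • (T₀ ^ s 0 * T₁ ^ s 1 * T₂ ^ s 2 * T₃ ^ s 3)

/-- Evaluation of a three-variable polynomial at a commuting triple of
operators. -/
def evalOp3 (T₁ T₂ T₃ : H →L[ℂ] H) (q : MvPolynomial (Fin 3) ℂ) : H →L[ℂ] H :=
  q.support.sum fun s =>
    MvPolynomial.coeff s q • (T₁ ^ s 0 * T₂ ^ s 1 * T₃ ^ s 2)

/-- The closed Euclidean unit ball `𝔹̄₂ ⊆ ℂ²`. -/
def closedBiball : Set (ℂ × ℂ) :=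
  {z | ‖z.1‖ ^ 2 + ‖z.2‖ ^ 2 ≤ 1}

/-- `sup_{w ∈ 𝔹̄₂} |q(w)|` for a polynomial `q` in two variables. -/
def biballPolySup (q : MvPolynomial (Fin 2) ℂ) : ℝ :=
  sSup ((fun z : ℂ × ℂ =>
    ‖MvPolynomial.eval ![z.1, z.2] q‖) '' closedBiball)

/-- The closed pentablock `ℙ̄ ⊆ ℂ³`. -/
def closedPentablock : Set (ℂ × ℂ × ℂ) :=
  {w | ∃ b : Matrix (Fin 2) (Fin 2) ℂ, ‖Matrix.toEuclideanCLM (𝕜 := ℂ) b‖ ≤ 1 ∧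
    w = (b 1 0, b 0 0 + b 1 1, b 0 0 * b 1 1 - b 0 1 * b 1 0)}

/-- `sup_{w ∈ ℙ̄} |q(w)|` for a polynomial `q` in three variables. -/
def pentaPolySup (q : MvPolynomial (Fin 3) ℂ) : ℝ :=
  sSup ((fun w : ℂ × ℂ × ℂ =>
    ‖MvPolynomial.eval ![w.1, w.2.1, w.2.2] q‖) '' closedPentablock)

/-- Evaluation of a two-variable polynomial at a commuting pair of
operators. -/
def evalOp2 (T₀ T₁ : H →L[ℂ] H) (q : MvPolynomial (Fin 2) ℂ) : H →L[ℂ] H :=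
  q.support.sum fun s => MvPolynomial.coeff s q • (T₀ ^ s 0 * T₁ ^ s 1)

/-!
Each of the four claims comes from one principle. If a polynomial map `g : ℂ⁴ → ℂⁿ` sends `ℍ̄`
into a bounded set `K`, then for every polynomial `q` on `ℂⁿ`,
`‖q(g(A, X₁, X₂, X₃))‖ = ‖(q ∘ g)(A, X₁, X₂, X₃)‖ ≤ sup_ℍ̄ |q ∘ g| ≤ sup_K |q|`, the equality being
the substitution rule of the polynomial calculus of the commuting quadruple, which takes place in
the commutative algebra the quadruple generates. The maps are `(a, x₁)`, `(a, x₂)`,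
`(x₁, x₂, x₃)` and `(a, x₁ + x₂, x₃)`.

The first two land in `𝔹̄₂`: put `z₂ = 0` (resp. `z₁ = 0`) in the hexablock inequality and
evaluate at the point where Cauchy–Schwarz is sharp. The third lands in `𝔼̄` by definition of `ℍ̄`.
For the last, write `x₁ + x₂ = λ₁ + λ₂` and `x₃ = λ₁ λ₂`. The tetrablock inequalities give the
symmetrized-bidisc inequalities for `(x₁ + x₂, x₃)`, so `|λ₁|, |λ₂| ≤ 1`. On the diagonal
`z₁ = z₂ = z` the hexablock inequality reads `|a| (1 - |z|²) ≤ |(1 - λ₁ z)(1 - λ₂ z)|`; a disc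
automorphism sending `0` to `λ̄₁`, an explicit extremal point and a limit `ρλᵢ → λᵢ` turn this into
`2|a| ≤ |1 - λ₁ λ̄₂| + √((1 - |λ₁|²)(1 - |λ₂|²))`. Under that bound there is an explicit `2 × 2`
matrix with lower-left entry `a`, trace `λ₁ + λ₂` and determinant `λ₁ λ₂` for which
`I - BᴴB` has nonnegative trace and determinant, i.e. a contraction.
-/

open ComplexConjugate MvPolynomial

/-! ### Contractive `2 × 2` matrices -/

lemma normSq_mul_add_add_normSq_mul_add_le {p q r s : ℂ}
    (h₁ : normSq p + normSq q + normSq r + normSq s ≤ 1 + normSq (p * s - q * r))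
    (h₂ : normSq p + normSq q + normSq r + normSq s ≤ 2) (v w : ℂ) :
    normSq (p * v + q * w) + normSq (r * v + s * w) ≤ normSq v + normSq w := by
  -- `h₁`, `h₂` say that `I - Bᴴ B = [[α, -conj γ], [-γ, β]]` has nonnegative determinant and trace
  set α := 1 - normSq p - normSq r
  set β := 1 - normSq q - normSq s
  set γ := p * conj q + r * conj s
  have hdet : normSq γ ≤ α * β := by
    have : α * β - normSq γ = 1 - (normSq p + normSq q + normSq r + normSq s) +
        normSq (p * s - q * r) := by
      simp only [α, β, γ, normSq_apply, add_re, add_im, mul_re, mul_im, sub_re, sub_im,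
        conj_re, conj_im]
      ring
    linarith
  have hform : normSq v + normSq w - normSq (p * v + q * w) - normSq (r * v + s * w) =
      α * normSq v + β * normSq w - 2 * (γ * (v * conj w)).re := by
    simp only [α, β, γ, normSq_apply, add_re, add_im, mul_re, mul_im, conj_re, conj_im]
    ring
  have hα : 0 ≤ α := by nlinarith [normSq_nonneg γ]
  have hβ : 0 ≤ β := by nlinarith [normSq_nonneg γ]
  have hγ : ‖γ‖ ≤ √α * √β := by
    rw [← Real.sqrt_mul hα, norm_def]; exact Real.sqrt_le_sqrt hdet
  have hre : (γ * (v * conj w)).re ≤ √α * √β * (‖v‖ * ‖w‖) :=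
    calc (γ * (v * conj w)).re ≤ ‖γ * (v * conj w)‖ := re_le_norm _
      _ = ‖γ‖ * (‖v‖ * ‖w‖) := by simp
      _ ≤ √α * √β * (‖v‖ * ‖w‖) := by gcongr
  rw [← Complex.sq_norm v, ← Complex.sq_norm w] at hform ⊢
  nlinarith [sq_nonneg (√α * ‖v‖ - √β * ‖w‖), Real.sq_sqrt hα, Real.sq_sqrt hβ]

lemma norm_toEuclideanCLM_fin_two_le_one {p q r s : ℂ}
    (h₁ : normSq p + normSq q + normSq r + normSq s ≤ 1 + normSq (p * s - q * r))
    (h₂ : normSq p + normSq q + normSq r + normSq s ≤ 2) :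
    ‖Matrix.toEuclideanCLM (𝕜 := ℂ) !![p, q; r, s]‖ ≤ 1 := by
  refine ContinuousLinearMap.opNorm_le_bound _ zero_le_one fun v => ?_
  rw [one_mul, EuclideanSpace.norm_eq, EuclideanSpace.norm_eq]
  refine Real.sqrt_le_sqrt ?_
  simpa [Fin.sum_univ_two, Matrix.mulVec, dotProduct, Complex.sq_norm] using
    normSq_mul_add_add_normSq_mul_add_le h₁ h₂ (v 0) (v 1)

lemma norm_entry_le_norm_toEuclideanCLM {𝕜 n : Type*} [RCLike 𝕜] [Fintype n] [DecidableEq n]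
    (b : Matrix n n 𝕜) (i j : n) : ‖b i j‖ ≤ ‖Matrix.toEuclideanCLM (𝕜 := 𝕜) b‖ := by
  have h := (Matrix.toEuclideanCLM (𝕜 := 𝕜) b).le_opNorm (PiLp.single 2 j (1 : 𝕜))
  rw [PiLp.norm_single, norm_one, mul_one] at h
  refine le_trans ?_ h
  simpa [Matrix.mulVec, dotProduct, PiLp.single_apply] using
    PiLp.norm_apply_le (Matrix.toEuclideanCLM (𝕜 := 𝕜) b (PiLp.single 2 j (1 : 𝕜))) i

/-! ### The tetrablock and the symmetrized bidisc -/

lemma tetrablock_real_bounds {t₁ t₂ t₃ M N : ℝ} (ht₁ : 0 ≤ t₁) (ht₂ : 0 ≤ t₂) (ht₃ : 0 ≤ t₃)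
    (hN : 0 ≤ N) (ht₁_le : t₁ ≤ 1) (hM : 2 * M ≤ 1 + t₁ ^ 2 - t₂ ^ 2 - t₃ ^ 2)
    (hM_ge : |t₁ - t₂ * t₃| ≤ M) (hN_sq : N ^ 2 = M ^ 2 + (t₂ ^ 2 - t₁ ^ 2) * (1 - t₃ ^ 2)) :
    t₂ ≤ 1 ∧ t₃ ≤ 1 ∧ M + N ≤ 1 - t₃ ^ 2 := by
  obtain ⟨hM₁, hM₂⟩ := abs_le.1 hM_ge
  have hsum : t₂ + t₃ ≤ 1 + t₁ := (sq_le_sq₀ (by positivity) (by positivity)).1 (by nlinarith)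
  have hdiff := abs_le_of_sq_le_sq' (by nlinarith : (t₂ - t₃) ^ 2 ≤ (1 - t₁) ^ 2) (by linarith)
  have hM_le : M ≤ 1 - t₃ ^ 2 := by
    rcases le_or_gt t₁ t₂ with h | h
    · nlinarith
    · nlinarith [mul_le_mul (by linarith : t₁ - t₂ ≤ 1 - t₃) (by linarith : t₁ + t₂ ≤ 1 + t₃)
        (by linarith) (by linarith)]
  have hN_le : N ≤ 1 - t₃ ^ 2 - M := by
    refine (sq_le_sq₀ hN (by linarith)).1 ?_
    rw [hN_sq]
    nlinarith [mul_le_mul_of_nonneg_right (by linarith : t₂ ^ 2 - t₁ ^ 2 ≤ 1 - t₃ ^ 2 - 2 * M)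
      (by nlinarith : 0 ≤ 1 - t₃ ^ 2)]
  exact ⟨by linarith, by linarith, by linarith⟩

lemma bounds_of_mem_closedTetrablock {x : ℂ × ℂ × ℂ} (hx : x ∈ closedTetrablock) :
    ‖x.2.1‖ ≤ 1 ∧ ‖x.2.2‖ ≤ 1 ∧
      ‖x.1 - conj x.2.1 * x.2.2‖ + ‖x.2.1 - conj x.1 * x.2.2‖ ≤ 1 - ‖x.2.2‖ ^ 2 := by
  obtain ⟨x₁, x₂, x₃⟩ := x
  obtain ⟨hx₁, hx⟩ := hx
  have hM : |‖x₁‖ - ‖x₂‖ * ‖x₃‖| ≤ ‖x₁ - conj x₂ * x₃‖ := by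
    simpa using abs_norm_sub_norm_le x₁ (conj x₂ * x₃)
  have hN : ‖x₂ - conj x₁ * x₃‖ ^ 2 =
      ‖x₁ - conj x₂ * x₃‖ ^ 2 + (‖x₂‖ ^ 2 - ‖x₁‖ ^ 2) * (1 - ‖x₃‖ ^ 2) := by
    simp only [Complex.sq_norm, Complex.normSq_apply, Complex.sub_re, Complex.sub_im,
      Complex.mul_re, Complex.mul_im, Complex.conj_re, Complex.conj_im]
    ring
  exact tetrablock_real_bounds (norm_nonneg _) (norm_nonneg _) (norm_nonneg _) (norm_nonneg _)
    hx₁ (by linarith) hM hN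

/-- The closed symmetrized bidisc `{(λ₁ + λ₂, λ₁ λ₂) : |λ₁|, |λ₂| ≤ 1}`, by its intrinsic
description. -/
def closedSymmetrizedBidisc : Set (ℂ × ℂ) :=
  {w | ‖w.1‖ ≤ 2 ∧ ‖w.1 - conj w.1 * w.2‖ ≤ 1 - ‖w.2‖ ^ 2}

lemma norm_le_one_of_mem_closedSymmetrizedBidisc {l μ : ℂ}
    (h : (l + μ, l * μ) ∈ closedSymmetrizedBidisc) : ‖l‖ ≤ 1 := by
  obtain ⟨hs, hp⟩ := h
  dsimp only at hs hp
  by_contra! hl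
  set a := ‖l‖
  set b := ‖μ‖
  have hid : l + μ - conj (l + μ) * (l * μ) =
      l * ((1 - b ^ 2 : ℝ) : ℂ) - μ * ((a ^ 2 - 1 : ℝ) : ℂ) := by
    simp only [a, b, Complex.ofReal_sub, Complex.ofReal_one, Complex.ofReal_pow,
      ← Complex.conj_mul', map_add]
    ring
  rw [hid, norm_mul] at hp
  have hab : a * b ≤ 1 := by
    nlinarith [norm_nonneg (l * ((1 - b ^ 2 : ℝ) : ℂ) - μ * ((a ^ 2 - 1 : ℝ) : ℂ))]
  have hb : b < 1 := by nlinarith [norm_nonneg μ]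
  have hnorm₁ : ‖l * ((1 - b ^ 2 : ℝ) : ℂ)‖ = a * (1 - b ^ 2) := by
    rw [norm_mul, Complex.norm_real, Real.norm_of_nonneg (by nlinarith [norm_nonneg μ])]
  have hnorm₂ : ‖μ * ((a ^ 2 - 1 : ℝ) : ℂ)‖ = b * (a ^ 2 - 1) := by
    rw [norm_mul, Complex.norm_real, Real.norm_of_nonneg (by nlinarith)]
  rcases hab.lt_or_eq with hab | hab
  · have := (norm_sub_norm_le _ _).trans hp
    rw [hnorm₁, hnorm₂] at this
    nlinarith [mul_pos (mul_pos (sub_pos.2 hab) (sub_pos.2 hl)) (sub_pos.2 hb)]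
  · have heq : l * ((1 - b ^ 2 : ℝ) : ℂ) = μ * ((a ^ 2 - 1 : ℝ) : ℂ) := by
      rw [hab, one_pow, sub_self] at hp
      exact sub_eq_zero.1 (norm_le_zero_iff.1 hp)
    have hsum : (l + μ) * ((1 - b ^ 2 : ℝ) : ℂ) = μ * ((a ^ 2 - b ^ 2 : ℝ) : ℂ) := by
      rw [add_mul, heq]; push_cast; ring
    have hsum_norm : ‖l + μ‖ * (1 - b ^ 2) = b * (a ^ 2 - b ^ 2) := by
      have := congrArg norm hsum
      rwa [norm_mul, norm_mul, Complex.norm_real, Complex.norm_real,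
        Real.norm_of_nonneg (by nlinarith [norm_nonneg μ]),
        Real.norm_of_nonneg (by nlinarith [norm_nonneg μ])] at this
    -- with `a * b = 1` this says `‖l + μ‖ = a + 1 / a > 2`
    nlinarith [mul_le_mul_of_nonneg_right hs (by nlinarith [norm_nonneg μ] : 0 ≤ 1 - b ^ 2),
      mul_pos (sub_pos.2 hl) (sub_pos.2 hb), norm_nonneg μ]

lemma mem_closedSymmetrizedBidisc_of_mem_closedTetrablock {x : ℂ × ℂ × ℂ}
    (hx : x ∈ closedTetrablock) : (x.1 + x.2.1, x.2.2) ∈ closedSymmetrizedBidisc := by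
  obtain ⟨hx₂, -, hx₃⟩ := bounds_of_mem_closedTetrablock hx
  refine ⟨(norm_add_le _ _).trans (by linarith [hx.1]), le_trans ?_ hx₃⟩
  calc ‖x.1 + x.2.1 - conj (x.1 + x.2.1) * x.2.2‖ =
        ‖(x.1 - conj x.2.1 * x.2.2) + (x.2.1 - conj x.1 * x.2.2)‖ := by rw [map_add]; ring_nf
    _ ≤ _ := norm_add_le _ _

/-! ### An extremal problem on the disc -/

lemma sq_norm_one_sub_mul_conj (l₁ l₂ : ℂ) :
    ‖1 - l₁ * conj l₂‖ ^ 2 = (1 - ‖l₁‖ ^ 2) * (1 - ‖l₂‖ ^ 2) + ‖l₁ - l₂‖ ^ 2 := by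
  simp only [Complex.sq_norm, Complex.normSq_apply, Complex.sub_re, Complex.sub_im,
    Complex.mul_re, Complex.mul_im, Complex.conj_re, Complex.conj_im, Complex.one_re,
    Complex.one_im]
  ring

lemma two_mul_le_of_forall_le_norm_add_mul {m : ℝ} {α β : ℂ} (hβ : ‖β‖ < ‖α‖)
    (h : ∀ ζ : ℂ, ‖ζ‖ < 1 → m * (1 - ‖ζ‖ ^ 2) ≤ ‖α + β * ζ‖) :
    2 * m ≤ ‖α‖ + √(‖α‖ ^ 2 - ‖β‖ ^ 2) := by
  have hk : 0 < ‖α‖ := (norm_nonneg β).trans_lt hβ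
  set g := √(‖α‖ ^ 2 - ‖β‖ ^ 2)
  have hg2 : ‖β‖ ^ 2 = ‖α‖ ^ 2 - g ^ 2 := by
    rw [Real.sq_sqrt (by nlinarith [norm_nonneg β])]; ring
  have hg : 0 < g := Real.sqrt_pos.2 (by nlinarith [norm_nonneg β])
  have hK : 0 < ‖α‖ * (‖α‖ + g) := by positivity
  -- at `ζ = -conj β α / (‖α‖ (‖α‖ + g))`: `‖α + β ζ‖ = g` and `1 - ‖ζ‖² = 2g / (‖α‖ + g)`
  set ζ := -(conj β * α) / ((‖α‖ * (‖α‖ + g) : ℝ) : ℂ)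
  have hζ : ‖ζ‖ = ‖β‖ / (‖α‖ + g) := by
    rw [norm_div, norm_neg, norm_mul, Complex.norm_conj, Complex.norm_real,
      Real.norm_of_nonneg hK.le]
    field_simp
  have hval : α + β * ζ = ((g / ‖α‖ : ℝ) : ℂ) * α := by
    have hββ : β * conj β = ((‖α‖ ^ 2 - g ^ 2 : ℝ) : ℂ) := by
      rw [Complex.mul_conj, Complex.normSq_eq_norm_sq, hg2]
    have hcoef : 1 - (‖α‖ ^ 2 - g ^ 2) / (‖α‖ * (‖α‖ + g)) = g / ‖α‖ := by
      field_simp; ring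
    calc α + β * ζ = α - (β * conj β) * α / ((‖α‖ * (‖α‖ + g) : ℝ) : ℂ) := by ring
      _ = ((1 - (‖α‖ ^ 2 - g ^ 2) / (‖α‖ * (‖α‖ + g)) : ℝ) : ℂ) * α := by
        rw [hββ]; push_cast; ring
      _ = ((g / ‖α‖ : ℝ) : ℂ) * α := by rw [hcoef]
  have key := h ζ (by rw [hζ, div_lt_one (by positivity)]; nlinarith [norm_nonneg β])
  have h1 : 1 - ‖ζ‖ ^ 2 = 2 * g / (‖α‖ + g) := by
    rw [hζ, div_pow, hg2]; field_simp; ring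
  rw [h1, hval, norm_mul, Complex.norm_real, Real.norm_of_nonneg (by positivity),
    div_mul_cancel₀ _ hk.ne', mul_div_assoc', div_le_iff₀ (by positivity)] at key
  nlinarith

lemma le_norm_add_mul_of_forall_le_norm_mul {m : ℝ} {l₁ l₂ : ℂ} (hl₁ : ‖l₁‖ < 1)
    (h : ∀ z : ℂ, ‖z‖ < 1 → m * (1 - ‖z‖ ^ 2) ≤ ‖(1 - l₁ * z) * (1 - l₂ * z)‖)
    {ζ : ℂ} (hζ : ‖ζ‖ < 1) :
    m * (1 - ‖ζ‖ ^ 2) ≤ ‖(1 - conj l₁ * l₂) + (l₂ - l₁) * ζ‖ := by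
  -- substitute the disc automorphism `z = (conj l₁ - ζ) / (1 - l₁ ζ)`
  set d := 1 - l₁ * ζ
  have hd : d ≠ 0 := by
    refine sub_ne_zero.2 fun h1 => ?_
    have := congrArg norm h1
    rw [norm_one, norm_mul] at this
    nlinarith [norm_nonneg l₁, norm_nonneg ζ]
  have hd' : 0 < ‖d‖ := norm_pos_iff.2 hd
  set z := (conj l₁ - ζ) / d
  have hzd : z * d = conj l₁ - ζ := div_mul_cancel₀ _ hd
  have e₁ : (1 - l₁ * z) * d = ((1 - ‖l₁‖ ^ 2 : ℝ) : ℂ) := by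
    rw [Complex.ofReal_sub, Complex.ofReal_one, Complex.ofReal_pow, ← Complex.mul_conj']
    linear_combination -l₁ * hzd
  have e₂ : (1 - l₂ * z) * d = (1 - conj l₁ * l₂) + (l₂ - l₁) * ζ := by
    linear_combination -l₂ * hzd
  have e₃ : (1 - ‖z‖ ^ 2) * ‖d‖ ^ 2 = (1 - ‖l₁‖ ^ 2) * (1 - ‖ζ‖ ^ 2) := by
    have : ‖d‖ ^ 2 - ‖conj l₁ - ζ‖ ^ 2 = (1 - ‖l₁‖ ^ 2) * (1 - ‖ζ‖ ^ 2) := by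
      have h := sq_norm_one_sub_mul_conj l₁ (conj ζ)
      rw [Complex.conj_conj, Complex.norm_conj, ← Complex.norm_conj (l₁ - conj ζ), map_sub,
        Complex.conj_conj] at h
      linarith
    rw [← this, ← hzd, norm_mul]
    ring
  have hl : 0 < 1 - ‖l₁‖ ^ 2 := by nlinarith [norm_nonneg l₁]
  have hz : ‖z‖ < 1 := by
    have : 0 < (1 - ‖z‖ ^ 2) * ‖d‖ ^ 2 := by
      rw [e₃]; exact mul_pos hl (by nlinarith [norm_nonneg ζ])
    nlinarith [norm_nonneg z, (mul_pos_iff_of_pos_right (by positivity : 0 < ‖d‖ ^ 2)).1 this]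
  have key := mul_le_mul_of_nonneg_right (h z hz) (sq_nonneg ‖d‖)
  have hprod : ‖(1 - l₁ * z) * (1 - l₂ * z)‖ * ‖d‖ ^ 2 =
      (1 - ‖l₁‖ ^ 2) * ‖(1 - conj l₁ * l₂) + (l₂ - l₁) * ζ‖ := by
    have n₁ : ‖1 - l₁ * z‖ * ‖d‖ = 1 - ‖l₁‖ ^ 2 := by
      rw [← norm_mul, e₁, Complex.norm_real, Real.norm_of_nonneg hl.le]
    rw [← e₂, norm_mul, norm_mul, ← n₁]
    ring
  rw [mul_assoc, e₃, hprod] at key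
  nlinarith

lemma two_mul_le_of_forall_le_norm_mul_of_norm_lt_one {m : ℝ} {l₁ l₂ : ℂ}
    (hl₁ : ‖l₁‖ < 1) (hl₂ : ‖l₂‖ < 1)
    (h : ∀ z : ℂ, ‖z‖ < 1 → m * (1 - ‖z‖ ^ 2) ≤ ‖(1 - l₁ * z) * (1 - l₂ * z)‖) :
    2 * m ≤ ‖1 - l₁ * conj l₂‖ + √((1 - ‖l₁‖ ^ 2) * (1 - ‖l₂‖ ^ 2)) := by
  have hα : ‖1 - conj l₁ * l₂‖ = ‖1 - l₁ * conj l₂‖ := by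
    rw [← Complex.norm_conj]; simp [mul_comm]
  have hdiff : ‖1 - l₁ * conj l₂‖ ^ 2 - ‖l₂ - l₁‖ ^ 2 = (1 - ‖l₁‖ ^ 2) * (1 - ‖l₂‖ ^ 2) := by
    rw [sq_norm_one_sub_mul_conj, norm_sub_rev]; ring
  have hβ : ‖l₂ - l₁‖ < ‖1 - conj l₁ * l₂‖ := by
    rw [hα]
    refine (sq_lt_sq₀ (norm_nonneg _) (norm_nonneg _)).1 ?_
    nlinarith [mul_pos (by nlinarith [norm_nonneg l₁] : 0 < 1 - ‖l₁‖ ^ 2)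
      (by nlinarith [norm_nonneg l₂] : 0 < 1 - ‖l₂‖ ^ 2)]
  have := two_mul_le_of_forall_le_norm_add_mul hβ
    fun ζ hζ => le_norm_add_mul_of_forall_le_norm_mul hl₁ h hζ
  rwa [hα, hdiff] at this

lemma two_mul_le_of_forall_le_norm_mul {m : ℝ} (hm : 0 ≤ m) {l₁ l₂ : ℂ}
    (hl₁ : ‖l₁‖ ≤ 1) (hl₂ : ‖l₂‖ ≤ 1)
    (h : ∀ z : ℂ, ‖z‖ < 1 → m * (1 - ‖z‖ ^ 2) ≤ ‖(1 - l₁ * z) * (1 - l₂ * z)‖) :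
    2 * m ≤ ‖1 - l₁ * conj l₂‖ + √((1 - ‖l₁‖ ^ 2) * (1 - ‖l₂‖ ^ 2)) := by
  -- apply the interior case to `(ρ l₁, ρ l₂)` and let `ρ → 1⁻`
  let G : ℝ → ℝ := fun ρ => ‖1 - ρ * l₁ * conj (ρ * l₂)‖ +
    √((1 - ‖(ρ : ℂ) * l₁‖ ^ 2) * (1 - ‖(ρ : ℂ) * l₂‖ ^ 2))
  have hG : Continuous G := by fun_prop
  have hGρ : ∀ ρ ∈ Set.Ioo (0 : ℝ) 1, 2 * m ≤ G ρ := by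
    rintro ρ ⟨hρ₀, hρ₁⟩
    have hρ : ∀ x : ℂ, ‖(ρ : ℂ) * x‖ = ρ * ‖x‖ := fun x => by
      rw [norm_mul, Complex.norm_real, Real.norm_of_nonneg hρ₀.le]
    refine two_mul_le_of_forall_le_norm_mul_of_norm_lt_one (by rw [hρ]; nlinarith)
      (by rw [hρ]; nlinarith) fun z hz => ?_
    calc m * (1 - ‖z‖ ^ 2) ≤ m * (1 - ‖(ρ : ℂ) * z‖ ^ 2) := by
          gcongr; rw [hρ]; nlinarith [norm_nonneg z]
      _ ≤ ‖(1 - l₁ * (ρ * z)) * (1 - l₂ * (ρ * z))‖ := h _ (by rw [hρ]; nlinarith [norm_nonneg z])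
      _ = ‖(1 - ρ * l₁ * z) * (1 - ρ * l₂ * z)‖ := by ring_nf
  have : 2 * m ≤ G 1 :=
    ge_of_tendsto ((hG.tendsto 1).mono_left (nhdsWithin_le_nhds (s := Set.Iio 1))) (by
      filter_upwards [Ioo_mem_nhdsLT zero_lt_one] with ρ hρ using hGρ ρ hρ)
  simpa [G] using this

/-! ### Points of the pentablock -/

lemma sq_norm_add_sq_norm_le {l₁ l₂ : ℂ} (hl₁ : ‖l₁‖ ≤ 1) (hl₂ : ‖l₂‖ ≤ 1) :
    ‖l₁‖ ^ 2 + ‖l₂‖ ^ 2 ≤ 1 + ‖l₁ * l₂‖ ^ 2 ∧ 1 + ‖l₁ * l₂‖ ^ 2 ≤ 2 := by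
  have h₁ := pow_le_one₀ (n := 2) (norm_nonneg l₁) hl₁
  have h₂ := pow_le_one₀ (n := 2) (norm_nonneg l₂) hl₂
  rw [norm_mul, mul_pow]
  constructor <;> nlinarith [mul_nonneg (sub_nonneg.2 h₁) (sub_nonneg.2 h₂)]

lemma mk_mem_closedPentablock {β₁ c a β₂ : ℂ}
    (h₁ : normSq β₁ + normSq c + normSq a + normSq β₂ ≤ 1 + normSq (β₁ * β₂ - c * a))
    (h₂ : normSq β₁ + normSq c + normSq a + normSq β₂ ≤ 2) :
    (a, β₁ + β₂, β₁ * β₂ - c * a) ∈ closedPentablock :=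
  ⟨!![β₁, c; a, β₂], norm_toEuclideanCLM_fin_two_le_one h₁ h₂, by simp⟩

lemma mem_closedPentablock_of_two_mul_norm_le_norm_sub {a l₁ l₂ : ℂ} (hl₁ : ‖l₁‖ ≤ 1)
    (hl₂ : ‖l₂‖ ≤ 1) (hD : 2 * ‖a‖ ≤ ‖l₁ - l₂‖) :
    (a, l₁ + l₂, l₁ * l₂) ∈ closedPentablock := by
  obtain ⟨hsq, hsq₂⟩ := sq_norm_add_sq_norm_le hl₁ hl₂
  obtain rfl | ha := eq_or_ne a 0
  · simpa using mk_mem_closedPentablock (β₁ := l₁) (c := 0) (a := 0) (β₂ := l₂)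
      (by simpa [normSq_eq_norm_sq] using hsq) (by simp only [normSq_eq_norm_sq]; simp; linarith)
  set m := ‖a‖
  set D := l₁ - l₂
  have hm : 0 < m := norm_pos_iff.2 ha
  have hD0 : 0 < ‖D‖ := by linarith
  -- diagonal `(l₁ + l₂ ± t D) / 2` and off-diagonal entries of modulus `m`, where `t` keeps
  -- the determinant equal to `l₁ l₂`
  set e := m ^ 2 / ‖D‖ ^ 2
  have he : e * ‖D‖ ^ 2 = m ^ 2 := div_mul_cancel₀ _ (by positivity)
  have h4e : 4 * e ≤ 1 := by
    rw [mul_div_assoc', div_le_one (by positivity)]; nlinarith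
  set t := √(1 - 4 * e)
  have ht : t ^ 2 = 1 - 4 * e := Real.sq_sqrt (by linarith)
  set c := (e : ℂ) * D ^ 2 / a
  have hc : ‖c‖ = m := by
    rw [norm_div, norm_mul, norm_pow, Complex.norm_real, Real.norm_of_nonneg (by positivity), he]
    change m ^ 2 / m = m
    field_simp
  have hdet : (l₁ + l₂ + t * D) / 2 * ((l₁ + l₂ - t * D) / 2) - c * a = l₁ * l₂ := by
    have htc : (t : ℂ) ^ 2 = 1 - 4 * e := by exact_mod_cast ht
    rw [div_mul_cancel₀ _ ha]
    linear_combination (-D ^ 2 / 4) * htc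
  have hpar₁ := parallelogram_law_with_norm ℝ l₁ l₂
  have hpar₂ := parallelogram_law_with_norm ℝ (l₁ + l₂) (t * D)
  have htD : ‖(t : ℂ) * D‖ ^ 2 = ‖D‖ ^ 2 - 4 * m ^ 2 := by
    rw [norm_mul, Complex.norm_real, Real.norm_eq_abs, mul_pow, sq_abs, ht]; linarith
  have hsum : normSq ((l₁ + l₂ + t * D) / 2) + normSq c + normSq a +
      normSq ((l₁ + l₂ - t * D) / 2) = ‖l₁‖ ^ 2 + ‖l₂‖ ^ 2 := by
    simp only [normSq_eq_norm_sq, norm_div, hc]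
    norm_num
    nlinarith
  have := mk_mem_closedPentablock (by rw [hdet, hsum, normSq_eq_norm_sq]; exact hsq)
    (by rw [hsum]; linarith)
  rwa [hdet, show (l₁ + l₂ + t * D) / 2 + (l₁ + l₂ - t * D) / 2 = l₁ + l₂ by ring] at this

lemma mem_closedPentablock_of_norm_sub_le {a l₁ l₂ : ℂ} (hl₁ : ‖l₁‖ ≤ 1) (hl₂ : ‖l₂‖ ≤ 1)
    (ha : a ≠ 0) (hD : ‖l₁ - l₂‖ ≤ 2 * ‖a‖)
    (h : 2 * ‖a‖ ≤ ‖1 - l₁ * conj l₂‖ + √((1 - ‖l₁‖ ^ 2) * (1 - ‖l₂‖ ^ 2))) :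
    (a, l₁ + l₂, l₁ * l₂) ∈ closedPentablock := by
  set m := ‖a‖
  set k := ‖1 - l₁ * conj l₂‖
  set g := √((1 - ‖l₁‖ ^ 2) * (1 - ‖l₂‖ ^ 2))
  set δ := ‖l₁ - l₂‖ ^ 2
  have hm : 0 < m := norm_pos_iff.2 ha
  have hg2 : g ^ 2 = (1 - ‖l₁‖ ^ 2) * (1 - ‖l₂‖ ^ 2) :=
    Real.sq_sqrt (mul_nonneg (by nlinarith [norm_nonneg l₁]) (by nlinarith [norm_nonneg l₂]))
  have hk2 : k ^ 2 = g ^ 2 + δ := by rw [sq_norm_one_sub_mul_conj, hg2]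
  have hg : 0 ≤ g := Real.sqrt_nonneg _
  have hk : 0 ≤ k := norm_nonneg _
  -- `(2m - g)² ≤ k² = g² + δ` gives `0 ≤ 4m² - δ ≤ 4mg`
  have hgk : g ≤ k := (sq_le_sq₀ hg hk).1 (by rw [hk2]; nlinarith [norm_nonneg (l₁ - l₂)])
  have h4 : 4 * m ^ 2 - δ ≤ 4 * m * g := by
    nlinarith [mul_nonneg (by linarith : 0 ≤ k + g - 2 * m) (by linarith : 0 ≤ k - g + 2 * m)]
  have h4' : 0 ≤ 4 * m ^ 2 - δ := by nlinarith [norm_nonneg (l₁ - l₂)]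
  have key : δ ^ 2 / (16 * m ^ 2) + m ^ 2 ≤ g ^ 2 + δ / 2 := by
    rw [div_add' _ _ _ (by positivity), div_le_iff₀ (by positivity)]
    nlinarith [mul_self_le_mul_self h4' h4]
  set c := (l₁ - l₂) ^ 2 / (4 * a)
  have hc : normSq c = δ ^ 2 / (16 * m ^ 2) := by
    simp only [c, δ, m, normSq_eq_norm_sq]
    norm_num; ring
  have hdet : (l₁ + l₂) / 2 * ((l₁ + l₂) / 2) - c * a = l₁ * l₂ := by
    simp only [c]; field_simp; ring
  have hpar := parallelogram_law_with_norm ℝ l₁ l₂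
  have hsum : normSq ((l₁ + l₂) / 2) + normSq c + normSq a + normSq ((l₁ + l₂) / 2) =
      ‖l₁‖ ^ 2 + ‖l₂‖ ^ 2 - δ / 2 + δ ^ 2 / (16 * m ^ 2) + m ^ 2 := by
    simp only [hc, normSq_eq_norm_sq]
    norm_num
    nlinarith
  have hp := (sq_norm_add_sq_norm_le hl₁ hl₂).2
  rw [norm_mul, mul_pow] at hp
  have := mk_mem_closedPentablock (β₁ := (l₁ + l₂) / 2) (c := c) (a := a) (β₂ := (l₁ + l₂) / 2)
    (by rw [hdet, hsum, normSq_eq_norm_sq, norm_mul]; nlinarith) (by rw [hsum]; nlinarith)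
  rwa [add_halves, hdet] at this

lemma mem_closedPentablock_of_two_mul_norm_le {a l₁ l₂ : ℂ} (hl₁ : ‖l₁‖ ≤ 1) (hl₂ : ‖l₂‖ ≤ 1)
    (h : 2 * ‖a‖ ≤ ‖1 - l₁ * conj l₂‖ + √((1 - ‖l₁‖ ^ 2) * (1 - ‖l₂‖ ^ 2))) :
    (a, l₁ + l₂, l₁ * l₂) ∈ closedPentablock := by
  rcases le_or_gt (2 * ‖a‖) ‖l₁ - l₂‖ with hD | hD
  · exact mem_closedPentablock_of_two_mul_norm_le_norm_sub hl₁ hl₂ hD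
  · exact mem_closedPentablock_of_norm_sub_le hl₁ hl₂
      (norm_pos_iff.1 (by linarith [norm_nonneg (l₁ - l₂)])) hD.le h

/-! ### Images of the hexablock -/

lemma sq_norm_add_sq_norm_le_one_of_forall {a x : ℂ} (hx : ‖x‖ ≤ 1)
    (h : ∀ z : ℂ, ‖z‖ < 1 → ‖a‖ * √(1 - ‖z‖ ^ 2) ≤ ‖1 - x * z‖) :
    ‖a‖ ^ 2 + ‖x‖ ^ 2 ≤ 1 := by
  by_contra! hlt
  -- the Cauchy–Schwarz extremal point `z = conj x / √(‖a‖² + ‖x‖²)` violates `h`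
  set ρ := √(‖a‖ ^ 2 + ‖x‖ ^ 2)
  have hρ2 : ρ ^ 2 = ‖a‖ ^ 2 + ‖x‖ ^ 2 := Real.sq_sqrt (by positivity)
  have hρ1 : 1 < ρ := Real.lt_sqrt_of_sq_lt (by linarith)
  have hρ0 : 0 < ρ := one_pos.trans hρ1
  have ha : 0 < ‖a‖ := by
    by_contra! ha0
    nlinarith [norm_nonneg a, norm_nonneg x]
  have hxρ : ‖x‖ < ρ := by nlinarith [norm_nonneg x]
  have hz : ‖conj x / ρ‖ = ‖x‖ / ρ := by
    rw [norm_div, Complex.norm_conj, Complex.norm_real, Real.norm_of_nonneg hρ0.le]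
  have hsqrt : √(1 - ‖conj x / ρ‖ ^ 2) = ‖a‖ / ρ := by
    rw [hz, Real.sqrt_eq_iff_mul_self_eq_of_pos (by positivity)]
    field_simp
    linarith
  have hxz : 1 - x * (conj x / ρ) = ((1 - ‖x‖ ^ 2 / ρ : ℝ) : ℂ) := by
    rw [← mul_div_assoc, Complex.mul_conj, Complex.normSq_eq_norm_sq]
    push_cast; ring
  have key := h _ (by rw [hz, div_lt_one hρ0]; exact hxρ)
  rw [hsqrt, hxz, Complex.norm_real, Real.norm_of_nonneg] at key
  · have : ρ ^ 2 / ρ ≤ 1 := by rw [hρ2]; field_simp at key ⊢; linarith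
    rw [pow_two, mul_div_cancel_right₀ _ hρ0.ne'] at this
    linarith
  · rw [sub_nonneg, div_le_one hρ0]; nlinarith [norm_nonneg x]

lemma mem_closedBiball_fst_of_mem_closedHexablock {w : ℂ × ℂ × ℂ × ℂ}
    (hw : w ∈ closedHexablock) : (w.1, w.2.1) ∈ closedBiball :=
  sq_norm_add_sq_norm_le_one_of_forall hw.1.1 fun z hz => by simpa using hw.2 z 0 hz (by simp)

lemma mem_closedBiball_snd_of_mem_closedHexablock {w : ℂ × ℂ × ℂ × ℂ}
    (hw : w ∈ closedHexablock) : (w.1, w.2.2.1) ∈ closedBiball :=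
  sq_norm_add_sq_norm_le_one_of_forall (bounds_of_mem_closedTetrablock hw.1).1
    fun z hz => by simpa using hw.2 0 z (by simp) hz

lemma exists_add_eq_and_mul_eq {K : Type*} [Field K] [IsAlgClosed K] [NeZero (2 : K)] (s p : K) :
    ∃ l₁ l₂ : K, l₁ + l₂ = s ∧ l₁ * l₂ = p := by
  obtain ⟨d, hd⟩ := IsAlgClosed.exists_pow_nat_eq (s ^ 2 - 4 * p) two_pos
  refine ⟨(s + d) / 2, (s - d) / 2, by field_simp; ring, ?_⟩
  field_simp
  linear_combination -hd

lemma mem_closedPentablock_of_mem_closedHexablock {w : ℂ × ℂ × ℂ × ℂ}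
    (hw : w ∈ closedHexablock) : (w.1, w.2.1 + w.2.2.1, w.2.2.2) ∈ closedPentablock := by
  obtain ⟨a, x₁, x₂, x₃⟩ := w
  obtain ⟨hx, hw⟩ := hw
  obtain ⟨l₁, l₂, hsum, hprod⟩ := exists_add_eq_and_mul_eq (x₁ + x₂) x₃
  have hΓ := mem_closedSymmetrizedBidisc_of_mem_closedTetrablock hx
  simp only [← hsum, ← hprod] at hΓ ⊢
  have hl₁ := norm_le_one_of_mem_closedSymmetrizedBidisc hΓ
  have hl₂ := norm_le_one_of_mem_closedSymmetrizedBidisc (l := l₂) (μ := l₁)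
    (by rwa [add_comm, mul_comm])
  refine mem_closedPentablock_of_two_mul_norm_le hl₁ hl₂
    (two_mul_le_of_forall_le_norm_mul (norm_nonneg a) hl₁ hl₂ fun z hz => ?_)
  have := hw z z hz hz
  rwa [Real.sqrt_mul_self (by nlinarith [norm_nonneg z]),
    show 1 - x₁ * z - x₂ * z + x₃ * z * z = (1 - l₁ * z) * (1 - l₂ * z) by
      linear_combination z * hsum - z * z * hprod] at this

lemma isBounded_closedBiball : Bornology.IsBounded closedBiball := by
  refine isBounded_iff_forall_norm_le.2 ⟨1, fun z hz => norm_prod_le_iff.2 ⟨?_, ?_⟩⟩ <;>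
    nlinarith [show ‖z.1‖ ^ 2 + ‖z.2‖ ^ 2 ≤ 1 from hz, norm_nonneg z.1, norm_nonneg z.2]

lemma isBounded_closedTetrablock : Bornology.IsBounded closedTetrablock := by
  refine isBounded_iff_forall_norm_le.2 ⟨1, fun x hx => ?_⟩
  obtain ⟨hx₂, hx₃, -⟩ := bounds_of_mem_closedTetrablock hx
  exact norm_prod_le_iff.2 ⟨hx.1, norm_prod_le_iff.2 ⟨hx₂, hx₃⟩⟩

lemma isBounded_closedPentablock : Bornology.IsBounded closedPentablock := by
  refine isBounded_iff_forall_norm_le.2 ⟨2, ?_⟩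
  rintro _ ⟨b, hb, rfl⟩
  have h : ∀ i j, ‖b i j‖ ≤ 1 := fun i j => (norm_entry_le_norm_toEuclideanCLM b i j).trans hb
  refine norm_prod_le_iff.2 ⟨(h 1 0).trans one_le_two, norm_prod_le_iff.2 ⟨?_, ?_⟩⟩
  · exact (norm_add_le _ _).trans (by linarith [h 0 0, h 1 1])
  · refine (norm_sub_le _ _).trans ?_
    rw [norm_mul, norm_mul]
    nlinarith [h 0 0, h 0 1, h 1 0, h 1 1, norm_nonneg (b 0 0), norm_nonneg (b 0 1),
      norm_nonneg (b 1 0), norm_nonneg (b 1 1)]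

/-! ### Suprema over the hexablock -/

lemma bddAbove_image_of_isBounded {α : Type*} [PseudoMetricSpace α] [ProperSpace α] {K : Set α}
    (hK : Bornology.IsBounded K) {f : α → ℝ} (hf : Continuous f) : BddAbove (f '' K) :=
  (hK.isCompact_closure.bddAbove_image hf.continuousOn).mono (Set.image_mono subset_closure)

lemma sSup_image_le_of_mapsTo {α β : Type*} {f : α → ℝ} {g : β → ℝ} {s : Set α} {t : Set β}
    (π : α → β) (hπ : Set.MapsTo π s t) (hfg : ∀ x ∈ s, f x = g (π x)) (hs : s.Nonempty)
    (ht : BddAbove (g '' t)) : sSup (f '' s) ≤ sSup (g '' t) :=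
  csSup_le_csSup ht (hs.image f) <| by
    rintro _ ⟨x, hx, rfl⟩
    exact ⟨π x, hπ hx, (hfg x hx).symm⟩

lemma eval_bind₁ {R σ τ : Type*} [CommSemiring R] (x : τ → R) (g : σ → MvPolynomial τ R)
    (q : MvPolynomial σ R) : eval x (bind₁ g q) = eval (fun i => eval x (g i)) q :=
  eval₂Hom_bind₁ (RingHom.id R) x g q

lemma zero_mem_closedHexablock : (0 : ℂ × ℂ × ℂ × ℂ) ∈ closedHexablock := by
  refine ⟨by simp [closedTetrablock], fun z₁ z₂ _ _ => ?_⟩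
  simp

lemma hexPolySup_bind₁_le_of_mapsTo_pair {K : Set (ℂ × ℂ)} (hK : Bornology.IsBounded K)
    (g : Fin 2 → MvPolynomial (Fin 4) ℂ)
    (hg : ∀ w ∈ closedHexablock, (eval ![w.1, w.2.1, w.2.2.1, w.2.2.2] (g 0),
      eval ![w.1, w.2.1, w.2.2.1, w.2.2.2] (g 1)) ∈ K) (q : MvPolynomial (Fin 2) ℂ) :
    hexPolySup (bind₁ g q) ≤ sSup ((fun z : ℂ × ℂ => ‖eval ![z.1, z.2] q‖) '' K) := by
  refine sSup_image_le_of_mapsTo _ hg (fun w _ => ?_) ⟨0, zero_mem_closedHexablock⟩ ?_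
  · rw [eval_bind₁]
    congr 3
    ext i; fin_cases i <;> rfl
  · exact bddAbove_image_of_isBounded hK
      ((continuous_eval q).comp (continuous_pi fun i => by fin_cases i <;> fun_prop)).norm

lemma hexPolySup_bind₁_le_of_mapsTo_triple {K : Set (ℂ × ℂ × ℂ)} (hK : Bornology.IsBounded K)
    (g : Fin 3 → MvPolynomial (Fin 4) ℂ)
    (hg : ∀ w ∈ closedHexablock, (eval ![w.1, w.2.1, w.2.2.1, w.2.2.2] (g 0),
      eval ![w.1, w.2.1, w.2.2.1, w.2.2.2] (g 1), eval ![w.1, w.2.1, w.2.2.1, w.2.2.2] (g 2)) ∈ K)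
    (q : MvPolynomial (Fin 3) ℂ) :
    hexPolySup (bind₁ g q) ≤ sSup ((fun x : ℂ × ℂ × ℂ => ‖eval ![x.1, x.2.1, x.2.2] q‖) '' K) := by
  refine sSup_image_le_of_mapsTo _ hg (fun w _ => ?_) ⟨0, zero_mem_closedHexablock⟩ ?_
  · rw [eval_bind₁]
    congr 3
    ext i; fin_cases i <;> rfl
  · exact bddAbove_image_of_isBounded hK
      ((continuous_eval q).comp (continuous_pi fun i => by fin_cases i <;> fun_prop)).norm

/-! ### Polynomial calculus of commuting operators -/

section PolynomialCalculus

variable {E : Type*} [NormedAddCommGroup E] [InnerProductSpace ℂ E]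

section Homomorphism

variable {S : Type*} [CommRing S] [Algebra ℂ S] (φ : S →ₐ[ℂ] (E →L[ℂ] E))

lemma evalOp2_map (v : Fin 2 → S) (q : MvPolynomial (Fin 2) ℂ) :
    evalOp2 (φ (v 0)) (φ (v 1)) q = φ (aeval v q) := by
  simp [aeval_def, eval₂_eq', evalOp2, Fin.prod_univ_two, Algebra.smul_def]

lemma evalOp3_map (v : Fin 3 → S) (q : MvPolynomial (Fin 3) ℂ) :
    evalOp3 (φ (v 0)) (φ (v 1)) (φ (v 2)) q = φ (aeval v q) := by
  simp [aeval_def, eval₂_eq', evalOp3, Fin.prod_univ_three, Algebra.smul_def, mul_assoc]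

lemma evalOp4_map (v : Fin 4 → S) (p : MvPolynomial (Fin 4) ℂ) :
    evalOp4 (φ (v 0)) (φ (v 1)) (φ (v 2)) (φ (v 3)) p = φ (aeval v p) := by
  simp [aeval_def, eval₂_eq', evalOp4, Fin.prod_univ_four, Algebra.smul_def, mul_assoc]

end Homomorphism

lemma evalOp4_X (T₀ T₁ T₂ T₃ : E →L[ℂ] E) (i : Fin 4) :
    evalOp4 T₀ T₁ T₂ T₃ (X i) = ![T₀, T₁, T₂, T₃] i := by
  fin_cases i <;> simp [evalOp4, support_X, coeff_X]

lemma evalOp4_add (T₀ T₁ T₂ T₃ : E →L[ℂ] E) (p q : MvPolynomial (Fin 4) ℂ) :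
    evalOp4 T₀ T₁ T₂ T₃ (p + q) = evalOp4 T₀ T₁ T₂ T₃ p + evalOp4 T₀ T₁ T₂ T₃ q := by
  let m : (Fin 4 →₀ ℕ) → ℂ → (E →L[ℂ] E) := fun s c =>
    c • (T₀ ^ s 0 * T₁ ^ s 1 * T₂ ^ s 2 * T₃ ^ s 3)
  have h : ∀ r : MvPolynomial (Fin 4) ℂ,
      evalOp4 T₀ T₁ T₂ T₃ r = (AddMonoidAlgebra.coeff r).sum m :=
    fun _ => (sum_def (b := m)).symm
  rw [h, h, h, AddMonoidAlgebra.coeff_add]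
  exact Finsupp.sum_add_index' (fun _ => zero_smul ℂ _) fun _ _ _ => add_smul _ _ _

open scoped IsMulCommutative

variable {A X₁ X₂ X₃ : E →L[ℂ] E}

lemma exists_evalOp4_eq_map_aeval (hc : ({A, X₁, X₂, X₃} : Set (E →L[ℂ] E)).Pairwise Commute) :
    ∃ (S : Subalgebra ℂ (E →L[ℂ] E)) (_ : IsMulCommutative S) (v : Fin 4 → S),
      ∀ p, evalOp4 A X₁ X₂ X₃ p = S.val (aeval v p) := by
  set S := Algebra.adjoin ℂ ({A, X₁, X₂, X₃} : Set (E →L[ℂ] E))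
  have hS : IsMulCommutative S := Algebra.isMulCommutative_adjoin ℂ fun x hx y hy => by
    obtain rfl | hxy := eq_or_ne x y
    · rfl
    · exact (hc hx hy hxy).eq
  let v : Fin 4 → S := fun i =>
    ⟨![A, X₁, X₂, X₃] i, Algebra.subset_adjoin (by fin_cases i <;> simp)⟩
  exact ⟨S, hS, v, evalOp4_map S.val v⟩

lemma evalOp4_bind₁_eq_evalOp2 (hc : ({A, X₁, X₂, X₃} : Set (E →L[ℂ] E)).Pairwise Commute)
    (g : Fin 2 → MvPolynomial (Fin 4) ℂ) (q : MvPolynomial (Fin 2) ℂ) :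
    evalOp4 A X₁ X₂ X₃ (bind₁ g q) =
      evalOp2 (evalOp4 A X₁ X₂ X₃ (g 0)) (evalOp4 A X₁ X₂ X₃ (g 1)) q := by
  obtain ⟨S, _, v, hv⟩ := exists_evalOp4_eq_map_aeval hc
  simp only [hv, aeval_bind₁]
  exact (evalOp2_map S.val _ q).symm

lemma evalOp4_bind₁_eq_evalOp3 (hc : ({A, X₁, X₂, X₃} : Set (E →L[ℂ] E)).Pairwise Commute)
    (g : Fin 3 → MvPolynomial (Fin 4) ℂ) (q : MvPolynomial (Fin 3) ℂ) :
    evalOp4 A X₁ X₂ X₃ (bind₁ g q) = evalOp3 (evalOp4 A X₁ X₂ X₃ (g 0))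
      (evalOp4 A X₁ X₂ X₃ (g 1)) (evalOp4 A X₁ X₂ X₃ (g 2)) q := by
  obtain ⟨S, _, v, hv⟩ := exists_evalOp4_eq_map_aeval hc
  simp only [hv, aeval_bind₁]
  exact (evalOp3_map S.val _ q).symm

lemma norm_evalOp2_le_of_mapsTo (hc : ({A, X₁, X₂, X₃} : Set (E →L[ℂ] E)).Pairwise Commute)
    (hvN : ∀ p : MvPolynomial (Fin 4) ℂ, ‖evalOp4 A X₁ X₂ X₃ p‖ ≤ hexPolySup p)
    {K : Set (ℂ × ℂ)} (hK : Bornology.IsBounded K)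
    (g : Fin 2 → MvPolynomial (Fin 4) ℂ)
    (hg : ∀ w ∈ closedHexablock, (eval ![w.1, w.2.1, w.2.2.1, w.2.2.2] (g 0),
      eval ![w.1, w.2.1, w.2.2.1, w.2.2.2] (g 1)) ∈ K) (q : MvPolynomial (Fin 2) ℂ) :
    ‖evalOp2 (evalOp4 A X₁ X₂ X₃ (g 0)) (evalOp4 A X₁ X₂ X₃ (g 1)) q‖ ≤
      sSup ((fun z : ℂ × ℂ => ‖eval ![z.1, z.2] q‖) '' K) := by
  rw [← evalOp4_bind₁_eq_evalOp2 hc]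
  exact (hvN _).trans (hexPolySup_bind₁_le_of_mapsTo_pair hK g hg q)

lemma norm_evalOp3_le_of_mapsTo (hc : ({A, X₁, X₂, X₃} : Set (E →L[ℂ] E)).Pairwise Commute)
    (hvN : ∀ p : MvPolynomial (Fin 4) ℂ, ‖evalOp4 A X₁ X₂ X₃ p‖ ≤ hexPolySup p)
    {K : Set (ℂ × ℂ × ℂ)} (hK : Bornology.IsBounded K)
    (g : Fin 3 → MvPolynomial (Fin 4) ℂ)
    (hg : ∀ w ∈ closedHexablock, (eval ![w.1, w.2.1, w.2.2.1, w.2.2.2] (g 0),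
      eval ![w.1, w.2.1, w.2.2.1, w.2.2.2] (g 1), eval ![w.1, w.2.1, w.2.2.1, w.2.2.2] (g 2)) ∈ K)
    (q : MvPolynomial (Fin 3) ℂ) :
    ‖evalOp3 (evalOp4 A X₁ X₂ X₃ (g 0)) (evalOp4 A X₁ X₂ X₃ (g 1))
      (evalOp4 A X₁ X₂ X₃ (g 2)) q‖ ≤
      sSup ((fun x : ℂ × ℂ × ℂ => ‖eval ![x.1, x.2.1, x.2.2] q‖) '' K) := by
  rw [← evalOp4_bind₁_eq_evalOp3 hc]
  exact (hvN _).trans (hexPolySup_bind₁_le_of_mapsTo_triple hK g hg q)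

end PolynomialCalculus

/-- If `(A, X₁, X₂, X₃)` is an `ℍ`-contraction, then `(A, X₁)` and `(A, X₂)`
are `𝔹₂`-contractions, `(X₁, X₂, X₃)` is an `𝔼`-contraction and
`(A, X₁ + X₂, X₃)` is a `ℙ`-contraction. -/
theorem H_contraction_implies_biball_tetra_penta
    (A X₁ X₂ X₃ : H →L[ℂ] H)
    (hc01 : Commute A X₁) (hc02 : Commute A X₂) (hc03 : Commute A X₃)
    (hc12 : Commute X₁ X₂) (hc13 : Commute X₁ X₃) (hc23 : Commute X₂ X₃)
    (hvN : ∀ p : MvPolynomial (Fin 4) ℂ, ‖evalOp4 A X₁ X₂ X₃ p‖ ≤ hexPolySup p) :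
    ((∀ q : MvPolynomial (Fin 2) ℂ, ‖evalOp2 A X₁ q‖ ≤ biballPolySup q) ∧
      (∀ q : MvPolynomial (Fin 2) ℂ, ‖evalOp2 A X₂ q‖ ≤ biballPolySup q)) ∧
    (∀ q : MvPolynomial (Fin 3) ℂ, ‖evalOp3 X₁ X₂ X₃ q‖ ≤ tetraPolySup q) ∧
    (∀ q : MvPolynomial (Fin 3) ℂ, ‖evalOp3 A (X₁ + X₂) X₃ q‖ ≤ pentaPolySup q) := by
  have hc : ({A, X₁, X₂, X₃} : Set (H →L[ℂ] H)).Pairwise Commute := by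
    simp [Set.pairwise_insert, hc01, hc02, hc03, hc12, hc13, hc23, hc01.symm, hc02.symm,
      hc03.symm, hc12.symm, hc13.symm, hc23.symm]
  refine ⟨⟨fun q => ?_, fun q => ?_⟩, fun q => ?_, fun q => ?_⟩
  · simpa [evalOp4_X, biballPolySup] using norm_evalOp2_le_of_mapsTo hc hvN
      isBounded_closedBiball ![X 0, X 1]
      (fun w hw => by simpa using mem_closedBiball_fst_of_mem_closedHexablock hw) q
  · simpa [evalOp4_X, biballPolySup] using norm_evalOp2_le_of_mapsTo hc hvN
      isBounded_closedBiball ![X 0, X 2]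
      (fun w hw => by simpa using mem_closedBiball_snd_of_mem_closedHexablock hw) q
  · simpa [evalOp4_X, tetraPolySup] using norm_evalOp3_le_of_mapsTo hc hvN
      isBounded_closedTetrablock ![X 1, X 2, X 3] (fun w hw => by simpa using hw.1) q
  · have := norm_evalOp3_le_of_mapsTo hc hvN isBounded_closedPentablock ![X 0, X 1 + X 2, X 3]
      (fun w hw => by simpa using mem_closedPentablock_of_mem_closedHexablock hw) q
    simpa [evalOp4_X, evalOp4_add, pentaPolySup] using this
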